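/- With linear perturbation Q(ε) = Q^(0) + ε Q^(1), 𝒜 absorbing and 𝒯 transient for Q(0), and A₁ invertible, the matrix Q_𝒯 := T₀ + R₀ (−A₁)⁻¹ S₁ is a Q-matrix on 𝒯. Moreover, if ν is the unique probability vector on 𝒯 with ν Q_𝒯 = 0 (which exists when Q_𝒯 has a single recurrent class), then α = c ν R₀ (−A₁)⁻¹ with normalization constant c = (ν R₀ (−A₁)⁻¹ 𝟙)⁻¹, and the first-order transient coefficient is β^(1) = c ν. -/

import Mathlib

/-!
Write `Q(ε) = Q⁽⁰⁾ + ε Q⁽¹⁾` in blocks over `𝒜 ⊕ 𝒯`; the top blocks of `Q⁽⁰⁾` vanish. With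
`π(ε) = [α(ε), ε γ(ε)]`, the balance equations `π(ε) Q(ε) = 0` divided by `ε` read
`α A₁ + γ (R₀ + ε R₁) = 0` and `α S₁ + γ (T₀ + ε T₁) = 0`. At `ε = 0` they force
`α = γ R₀ (−A₁)⁻¹` and `γ Q_𝒯 = 0`, hence `γ = c ν`, with `c` fixed by `∑ α = 1`. Since `α(ε)`
ranges over a compact cube and `γ(ε) = −α(ε) S₁ (T₀ + ε T₁)⁻¹` depends continuously on it, every
cluster value of `α(ε)` as `ε → 0⁺` satisfies the limit equations, so `α(ε)` and `γ(ε)` converge.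

That `Q_𝒯` is a Q-matrix rests on `(−A₁)⁻¹ ≥ 0` (`−A₁` is a nonsingular Z-matrix with nonnegative
row sums) and on `(−A₁)⁻¹ S₁ 𝟙 = 𝟙`.
-/

open Matrix Filter Topology

/-- The matrix `Q_𝒯 = T₀ + R₀ (−A₁)⁻¹ S₁`. -/
noncomputable def QTmat {A T : Type*} [Fintype A] [DecidableEq A]
    (Q0 Q1 : Matrix (A ⊕ T) (A ⊕ T) ℝ) : Matrix T T ℝ :=
  Q0.toBlocks₂₂ + Q0.toBlocks₂₁ * (-Q1.toBlocks₁₁)⁻¹ * Q1.toBlocks₁₂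

namespace Matrix

variable {n : Type*} [Fintype n] {B : Matrix n n ℝ}

theorem continuousAt_inv_of_det_ne_zero [DecidableEq n] (hB : B.det ≠ 0) :
    ContinuousAt Inv.inv B :=
  continuousAt_matrix_inv B (by rw [Ring.inverse_eq_inv']; exact continuousAt_inv₀ hB)

/-- Minimum principle: at a negative minimum `m = y k` of `y`, `(B *ᵥ y) k ≤ m ∑ⱼ B k j < 0`. -/
theorem nonneg_of_mulVec_nonneg (hoff : ∀ i j, i ≠ j → B i j ≤ 0) (hrow : ∀ i, 0 < ∑ j, B i j)
    {y : n → ℝ} (hy : ∀ i, 0 ≤ (B *ᵥ y) i) (i : n) : 0 ≤ y i := by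
  by_contra! hneg
  obtain ⟨k, -, hk⟩ := Finset.univ.exists_min_image y ⟨i, Finset.mem_univ i⟩
  have hyk : y k < 0 := (hk i (Finset.mem_univ i)).trans_lt hneg
  have hle : (B *ᵥ y) k ≤ (∑ j, B k j) * y k := by
    rw [Finset.sum_mul]
    refine Finset.sum_le_sum fun j _ => ?_
    rcases eq_or_ne k j with rfl | hkj
    · rfl
    · exact mul_le_mul_of_nonpos_left (hk j (Finset.mem_univ j)) (hoff k j hkj)
  linarith [hy k, mul_neg_of_pos_of_neg (hrow k) hyk]

theorem inv_nonneg_of_rowSum_pos [DecidableEq n] (hoff : ∀ i j, i ≠ j → B i j ≤ 0)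
    (hrow : ∀ i, 0 < ∑ j, B i j) (i j : n) : 0 ≤ B⁻¹ i j := by
  have hunit : IsUnit B := by
    refine mulVec_injective_iff_isUnit.mp fun y z hyz => funext fun i => ?_
    have hker : B *ᵥ (y - z) = 0 := by rw [mulVec_sub, hyz, sub_self]
    have h₁ := nonneg_of_mulVec_nonneg hoff hrow (y := y - z) (by simp [hker]) i
    have h₂ := nonneg_of_mulVec_nonneg hoff hrow (y := z - y)
      (by rw [← neg_sub, mulVec_neg, hker]; simp) i
    simp only [Pi.sub_apply] at h₁ h₂
    linarith
  have hcol : B *ᵥ (B⁻¹ *ᵥ Pi.single j 1) = Pi.single j 1 := by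
    rw [mulVec_mulVec, mul_nonsing_inv _ ((isUnit_iff_isUnit_det B).mp hunit), one_mulVec]
  have := nonneg_of_mulVec_nonneg hoff hrow (y := B⁻¹ *ᵥ Pi.single j 1)
    (by rw [hcol]; intro k; rw [Pi.single_apply]; split_ifs <;> norm_num) i
  simpa [mulVec_single_one] using this

/-- `B⁻¹` is the limit of the inverses of the strictly diagonally dominant `B + δ • 1`, `δ → 0⁺`. -/
theorem inv_nonneg_of_rowSum_nonneg [DecidableEq n] (hoff : ∀ i j, i ≠ j → B i j ≤ 0)
    (hrow : ∀ i, 0 ≤ ∑ j, B i j) (hB : IsUnit B.det) (i j : n) : 0 ≤ B⁻¹ i j := by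
  have hshift : ∀ δ : ℝ, 0 < δ → 0 ≤ (B + δ • (1 : Matrix n n ℝ))⁻¹ i j := by
    intro δ hδ
    refine inv_nonneg_of_rowSum_pos (fun i j hij => ?_) (fun i => ?_) i j
    · simpa [one_apply_ne hij] using hoff i j hij
    · simp only [add_apply, smul_apply, one_apply, smul_eq_mul, mul_ite, mul_one, mul_zero,
        Finset.sum_add_distrib, Finset.sum_ite_eq, Finset.mem_univ, ↓reduceIte]
      linarith [hrow i]
  have hlim : Tendsto (fun δ : ℝ => (B + δ • (1 : Matrix n n ℝ))⁻¹) (𝓝[>] 0) (𝓝 B⁻¹) := by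
    have hcont : Continuous fun δ : ℝ => B + δ • (1 : Matrix n n ℝ) := by fun_prop
    exact ((continuousAt_inv_of_det_ne_zero hB.ne_zero).tendsto.comp
      (hcont.tendsto' 0 B (by simp))).mono_left nhdsWithin_le_nhds
  exact ge_of_tendsto (hlim.apply_nhds i |>.apply_nhds j)
    (eventually_nhdsWithin_of_forall hshift)

end Matrix

section QMatrix

variable {n : Type*} [Fintype n]

def IsQMatrix (Q : Matrix n n ℝ) : Prop :=
  (∀ x y, x ≠ y → 0 ≤ Q x y) ∧ ∀ x, ∑ y, Q x y = 0

theorem isClosed_setOf_isQMatrix : IsClosed {Q : Matrix n n ℝ | IsQMatrix Q} := by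
  simp only [IsQMatrix, Set.ofPred_and, Set.ofPred_forall]
  refine .inter (isClosed_iInter fun x => isClosed_iInter fun y => isClosed_iInter fun _ =>
    isClosed_le continuous_const (by fun_prop)) (isClosed_iInter fun x =>
    isClosed_eq (by fun_prop) continuous_const)

theorem IsQMatrix.of_linear {Q0 Q1 : Matrix n n ℝ} {ε₀ : ℝ} (hε₀ : 0 < ε₀)
    (hQ : ∀ ε : ℝ, 0 < ε → ε < ε₀ → IsQMatrix (Q0 + ε • Q1)) : IsQMatrix Q0 := by
  have hlim : Tendsto (fun ε : ℝ => Q0 + ε • Q1) (𝓝[>] 0) (𝓝 Q0) :=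
    ((Continuous.tendsto' (by fun_prop) 0 Q0 (by simp))).mono_left nhdsWithin_le_nhds
  refine isClosed_setOf_isQMatrix.mem_of_tendsto hlim ?_
  filter_upwards [Ioo_mem_nhdsGT hε₀] with ε hε using hQ ε hε.1 hε.2

variable {A T : Type*} [Fintype A] [Fintype T]

theorem isQMatrix_fromBlocks_of_linear {Q0 Q1 : Matrix (A ⊕ T) (A ⊕ T) ℝ} {ε₀ : ℝ} (hε₀ : 0 < ε₀)
    (hQ : ∀ ε : ℝ, 0 < ε → ε < ε₀ → IsQMatrix (Q0 + ε • Q1))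
    (habs : ∀ a y, Q0 (Sum.inl a) y = 0) :
    IsQMatrix (fromBlocks Q1.toBlocks₁₁ Q1.toBlocks₁₂ Q0.toBlocks₂₁ Q0.toBlocks₂₂) := by
  obtain ⟨ε, hε, hεε₀⟩ : ∃ ε, 0 < ε ∧ ε < ε₀ := ⟨ε₀ / 2, by positivity, by linarith⟩
  obtain ⟨hoff₁, hrow₁⟩ := hQ ε hε hεε₀
  obtain ⟨hoff₀, hrow₀⟩ := IsQMatrix.of_linear hε₀ hQ
  have hQA : ∀ a y, (Q0 + ε • Q1) (Sum.inl a) y = ε * Q1 (Sum.inl a) y := by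
    simp [habs]
  have hA : ∀ a y, fromBlocks Q1.toBlocks₁₁ Q1.toBlocks₁₂ Q0.toBlocks₂₁ Q0.toBlocks₂₂
      (Sum.inl a) y = Q1 (Sum.inl a) y := by
    rintro a (b | s) <;> rfl
  have hT : ∀ t y, fromBlocks Q1.toBlocks₁₁ Q1.toBlocks₁₂ Q0.toBlocks₂₁ Q0.toBlocks₂₂
      (Sum.inr t) y = Q0 (Sum.inr t) y := by
    rintro t (b | s) <;> rfl
  constructor
  · rintro (a | t) y hne
    · rw [hA]
      exact nonneg_of_mul_nonneg_right (hQA a y ▸ hoff₁ _ y hne) hε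
    · rw [hT]
      exact hoff₀ _ y hne
  · rintro (a | t)
    · simp only [hA]
      have := hrow₁ (Sum.inl a)
      simp only [hQA, ← Finset.mul_sum] at this
      exact (mul_eq_zero.mp this).resolve_left hε.ne'
    · simp only [hT]
      exact hrow₀ _

theorem IsQMatrix.schurComplement [DecidableEq A] {A₁ : Matrix A A ℝ} {S₁ : Matrix A T ℝ}
    {R₀ : Matrix T A ℝ} {T₀ : Matrix T T ℝ} (hQ : IsQMatrix (fromBlocks A₁ S₁ R₀ T₀))
    (hA₁ : IsUnit A₁.det) : IsQMatrix (T₀ + R₀ * (-A₁)⁻¹ * S₁) := by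
  obtain ⟨hoff, hrow⟩ := hQ
  have hS₁ : ∀ a t, 0 ≤ S₁ a t := fun a t => by simpa using hoff (.inl a) (.inr t) (by simp)
  have hR₀ : ∀ t a, 0 ≤ R₀ t a := fun t a => by simpa using hoff (.inr t) (.inl a) (by simp)
  have hrowA : ∀ a, ∑ b, A₁ a b + ∑ t, S₁ a t = 0 := fun a => by
    simpa [Fintype.sum_sum_type] using hrow (.inl a)
  have hrowT : ∀ t, ∑ a, R₀ t a + ∑ s, T₀ t s = 0 := fun t => by
    simpa [Fintype.sum_sum_type] using hrow (.inr t)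
  have hN : ∀ a b, 0 ≤ (-A₁)⁻¹ a b := by
    refine Matrix.inv_nonneg_of_rowSum_nonneg (fun a b hab => ?_) (fun a => ?_) ?_
    · simpa using hoff (.inl a) (.inl b) (by simpa using hab)
    · simp only [Matrix.neg_apply, Finset.sum_neg_distrib]
      linarith [hrowA a, Finset.sum_nonneg fun t (_ : t ∈ Finset.univ) => hS₁ a t]
    · simpa [det_neg] using hA₁
  have hS₁one : ((-A₁)⁻¹ * S₁) *ᵥ 1 = 1 := by
    have : S₁ *ᵥ 1 = (-A₁) *ᵥ 1 := funext fun a => by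
      simp only [mulVec, dotProduct, Pi.one_apply, mul_one, Matrix.neg_apply,
        Finset.sum_neg_distrib]
      linarith [hrowA a]
    rw [← mulVec_mulVec, this, mulVec_mulVec, nonsing_inv_mul _ (by simpa [det_neg] using hA₁),
      one_mulVec]
  constructor
  · intro s t hst
    refine add_nonneg (by simpa using hoff (.inr s) (.inr t) (by simpa using hst)) ?_
    exact Finset.sum_nonneg fun b _ => mul_nonneg
      (Finset.sum_nonneg fun a _ => mul_nonneg (hR₀ s a) (hN a b)) (hS₁ b t)
  · intro s
    have hrow : ((T₀ + R₀ * (-A₁)⁻¹ * S₁) *ᵥ 1) s = 0 := by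
      rw [add_mulVec, Matrix.mul_assoc, ← mulVec_mulVec, hS₁one]
      simpa [mulVec, dotProduct, add_comm] using hrowT s
    simpa [mulVec, dotProduct] using hrow

end QMatrix

section ScaledStationary

variable {A T : Type*} [Fintype A] [Fintype T]
  (A₁ : Matrix A A ℝ) (S₁ : Matrix A T ℝ) (R₀ R₁ : Matrix T A ℝ) (T₀ T₁ : Matrix T T ℝ)

/-- `x ⊕ ε μ` is a stationary distribution of `fromBlocks (ε A₁) (ε S₁) (R₀ + ε R₁) (T₀ + ε T₁)`;
the balance equations are divided by `ε`, so that they still make sense at `ε = 0`. -/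
def IsScaledStationary (ε : ℝ) (x : A → ℝ) (μ : T → ℝ) : Prop :=
  (∀ a, 0 ≤ x a) ∧ (∀ t, 0 ≤ μ t) ∧ ∑ a, x a + ε * ∑ t, μ t = 1 ∧
    x ᵥ* A₁ + μ ᵥ* (R₀ + ε • R₁) = 0 ∧ x ᵥ* S₁ + μ ᵥ* (T₀ + ε • T₁) = 0

theorem isClosed_setOf_isScaledStationary :
    IsClosed {q : ℝ × (A → ℝ) × (T → ℝ) |
      IsScaledStationary A₁ S₁ R₀ R₁ T₀ T₁ q.1 q.2.1 q.2.2} := by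
  simp only [IsScaledStationary, Set.ofPred_and, Set.ofPred_forall]
  refine .inter (isClosed_iInter fun a => isClosed_le continuous_const (by fun_prop)) <|
    .inter (isClosed_iInter fun t => isClosed_le continuous_const (by fun_prop)) <|
    .inter (isClosed_eq (by fun_prop) continuous_const) <|
    .inter (isClosed_eq (by fun_prop) continuous_const) (isClosed_eq (by fun_prop) continuous_const)

variable {A₁ S₁ R₀ R₁ T₀ T₁}

theorem isScaledStationary_of_vecMul_eq_zero {ε : ℝ} (hε : 0 < ε) {p : A ⊕ T → ℝ}
    (hp : ∀ x, 0 ≤ p x) (hp₁ : ∑ x, p x = 1)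
    (hstat : p ᵥ* fromBlocks (ε • A₁) (ε • S₁) (R₀ + ε • R₁) (T₀ + ε • T₁) = 0) :
    IsScaledStationary A₁ S₁ R₀ R₁ T₀ T₁ ε (fun a => p (.inl a)) (fun t => p (.inr t) / ε) := by
  have hp_inr : p ∘ Sum.inr = ε • fun t => p (.inr t) / ε :=
    funext fun t => (mul_div_cancel₀ _ hε.ne').symm
  rw [vecMul_fromBlocks, ← Sum.elim_zero_zero, Sum.elim_eq_iff, hp_inr] at hstat
  simp only [vecMul_smul, smul_vecMul ε, ← smul_add, smul_eq_zero, hε.ne', false_or] at hstat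
  refine ⟨fun a => hp _, fun t => div_nonneg (hp _) hε.le, ?_, hstat⟩
  rw [← hp₁, Fintype.sum_sum_type, Finset.mul_sum]
  simp only [mul_div_cancel₀ _ hε.ne']

theorem eq_smul_of_isScaledStationary_zero [DecidableEq A] (hA₁ : IsUnit A₁.det) {ν : T → ℝ}
    (hν : ∀ ν' : T → ℝ, ((∀ t, 0 ≤ ν' t) ∧ (∑ t, ν' t = 1) ∧
      ν' ᵥ* (T₀ + R₀ * (-A₁)⁻¹ * S₁) = 0) → ν' = ν)
    {x : A → ℝ} {μ : T → ℝ} (h : IsScaledStationary A₁ S₁ R₀ R₁ T₀ T₁ 0 x μ) :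
    x = (∑ b, (ν ᵥ* (R₀ * (-A₁)⁻¹)) b)⁻¹ • ν ᵥ* (R₀ * (-A₁)⁻¹) ∧
      μ = (∑ b, (ν ᵥ* (R₀ * (-A₁)⁻¹)) b)⁻¹ • ν := by
  obtain ⟨-, hμ, hsum, h₁, h₂⟩ := h
  simp only [zero_smul, add_zero, zero_mul] at hsum h₁ h₂
  have hneg : IsUnit (-A₁).det := by simpa [det_neg] using hA₁
  have hx : x = μ ᵥ* (R₀ * (-A₁)⁻¹) := by
    have : x ᵥ* (-A₁) = μ ᵥ* R₀ := by rw [vecMul_neg, neg_eq_iff_add_eq_zero, h₁]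
    rw [← vecMul_vecMul, ← this, vecMul_vecMul, mul_nonsing_inv _ hneg, vecMul_one]
  have hμQ : μ ᵥ* (T₀ + R₀ * (-A₁)⁻¹ * S₁) = 0 := by
    rw [vecMul_add, ← vecMul_vecMul, ← hx, add_comm, h₂]
  set σ := ∑ t, μ t
  have hσ : 0 < σ := by
    refine (Finset.sum_nonneg fun t _ => hμ t).lt_of_ne fun hσ => ?_
    have hμ0 : μ = 0 := funext fun t =>
      (Finset.sum_eq_zero_iff_of_nonneg fun t _ => hμ t).mp hσ.symm t (Finset.mem_univ t)
    simp [hx, hμ0] at hsum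
  have hμν : μ = σ • ν := by
    rw [← hν (σ⁻¹ • μ) ⟨fun t => mul_nonneg (inv_nonneg.mpr hσ.le) (hμ t), ?_, ?_⟩,
      smul_smul, mul_inv_cancel₀ hσ.ne', one_smul]
    · simp only [Pi.smul_apply, smul_eq_mul, ← Finset.mul_sum]
      exact inv_mul_cancel₀ hσ.ne'
    · rw [smul_vecMul, hμQ, smul_zero]
  have hxν : x = σ • ν ᵥ* (R₀ * (-A₁)⁻¹) := by rw [hx, hμν, smul_vecMul]
  have hσc : σ = (∑ b, (ν ᵥ* (R₀ * (-A₁)⁻¹)) b)⁻¹ := by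
    rw [hxν] at hsum
    simp only [Pi.smul_apply, smul_eq_mul, ← Finset.mul_sum] at hsum
    exact (inv_eq_of_mul_eq_one_left hsum).symm
  exact ⟨hσc ▸ hxν, hσc ▸ hμν⟩

theorem tendsto_transient_of_isScaledStationary [DecidableEq T] (hT₀ : IsUnit T₀.det)
    {l : Filter ℝ} (hl : l ≤ 𝓝 0) {α : ℝ → A → ℝ} {γ : ℝ → T → ℝ}
    (h : ∀ᶠ ε in l, IsScaledStationary A₁ S₁ R₀ R₁ T₀ T₁ ε (α ε) (γ ε))
    {x : A → ℝ} (hα : Tendsto α l (𝓝 x)) :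
    Tendsto γ l (𝓝 (-(x ᵥ* S₁) ᵥ* T₀⁻¹)) := by
  have hcont : Continuous fun ε : ℝ => T₀ + ε • T₁ := by fun_prop
  have hdet : ∀ᶠ ε in l, IsUnit (T₀ + ε • T₁).det := hl <|
    (hcont.matrix_det.continuousAt.eventually_ne (by simpa using hT₀.ne_zero)).mono
      fun _ h => isUnit_iff_ne_zero.mpr h
  have hinv : Tendsto (fun ε : ℝ => (T₀ + ε • T₁)⁻¹) l (𝓝 T₀⁻¹) :=
    (continuousAt_inv_of_det_ne_zero hT₀.ne_zero).tendsto.comp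
      ((hcont.tendsto' 0 T₀ (by simp)).mono_left hl)
  have hvecMul : Continuous fun q : (T → ℝ) × Matrix T T ℝ => q.1 ᵥ* q.2 := by fun_prop
  have hαS₁ : Tendsto (fun ε => -(α ε ᵥ* S₁)) l (𝓝 (-(x ᵥ* S₁))) :=
    (((continuous_id.matrix_vecMul continuous_const).tendsto x).comp hα).neg
  refine ((hvecMul.tendsto _).comp (hαS₁.prodMk_nhds hinv)).congr' ?_
  filter_upwards [h, hdet] with ε hε hunit
  have hγ : γ ε ᵥ* (T₀ + ε • T₁) = -(α ε ᵥ* S₁) :=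
    eq_neg_of_add_eq_zero_left ((add_comm _ _).trans hε.2.2.2.2)
  simp only [Function.comp_apply, ← hγ, vecMul_vecMul, mul_nonsing_inv _ hunit, vecMul_one]

theorem tendsto_of_isScaledStationary [DecidableEq A] [DecidableEq T] (hA₁ : IsUnit A₁.det)
    (hT₀ : IsUnit T₀.det) {ν : T → ℝ} (hν : ∀ ν' : T → ℝ, ((∀ t, 0 ≤ ν' t) ∧ (∑ t, ν' t = 1) ∧
      ν' ᵥ* (T₀ + R₀ * (-A₁)⁻¹ * S₁) = 0) → ν' = ν)
    {α : ℝ → A → ℝ} {γ : ℝ → T → ℝ}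
    (h : ∀ᶠ ε in 𝓝[>] 0, IsScaledStationary A₁ S₁ R₀ R₁ T₀ T₁ ε (α ε) (γ ε)) :
    Tendsto α (𝓝[>] 0) (𝓝 ((∑ b, (ν ᵥ* (R₀ * (-A₁)⁻¹)) b)⁻¹ • ν ᵥ* (R₀ * (-A₁)⁻¹))) ∧
      Tendsto γ (𝓝[>] 0) (𝓝 ((∑ b, (ν ᵥ* (R₀ * (-A₁)⁻¹)) b)⁻¹ • ν)) := by
  have hlim : ∀ {l : Filter ℝ} [l.NeBot], l ≤ 𝓝[>] 0 → ∀ {x}, Tendsto α l (𝓝 x) →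
      x = (∑ b, (ν ᵥ* (R₀ * (-A₁)⁻¹)) b)⁻¹ • ν ᵥ* (R₀ * (-A₁)⁻¹) ∧
        -(x ᵥ* S₁) ᵥ* T₀⁻¹ = (∑ b, (ν ᵥ* (R₀ * (-A₁)⁻¹)) b)⁻¹ • ν := by
    intro l _ hl x hα
    have hl₀ : l ≤ 𝓝 0 := hl.trans nhdsWithin_le_nhds
    have hγ := tendsto_transient_of_isScaledStationary hT₀ hl₀ (h.filter_mono hl) hα
    refine eq_smul_of_isScaledStationary_zero hA₁ hν
      ((isClosed_setOf_isScaledStationary A₁ S₁ R₀ R₁ T₀ T₁).mem_of_tendsto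
        ((tendsto_id.mono_left hl₀).prodMk_nhds (hα.prodMk_nhds hγ)) (h.filter_mono hl))
  have hcube : ∀ᶠ ε in 𝓝[>] 0, α ε ∈ Set.univ.pi fun _ => Set.Icc (0 : ℝ) 1 := by
    filter_upwards [h, self_mem_nhdsWithin] with ε hstat (hε : 0 < ε) a _
    obtain ⟨hα, hγ, hsum, -⟩ := hstat
    have : 0 ≤ ε * ∑ t, γ ε t := mul_nonneg hε.le (Finset.sum_nonneg fun t _ => hγ t)
    exact ⟨hα a, (Finset.single_le_sum (fun b _ => hα b) (Finset.mem_univ a)).trans (by linarith)⟩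
  have hα : Tendsto α (𝓝[>] 0) (𝓝 _) :=
    (isCompact_univ_pi fun _ => isCompact_Icc).tendsto_nhds_of_unique_mapClusterPt hcube
      fun x _ hx => by
        obtain ⟨U, hU, hUx⟩ := mapClusterPt_iff_ultrafilter.mp hx
        exact (hlim hU hUx).1
  exact ⟨hα, (hlim le_rfl hα).2 ▸ tendsto_transient_of_isScaledStationary hT₀
    nhdsWithin_le_nhds h hα⟩

end ScaledStationary

theorem stmt13_general {A T : Type*} [Fintype A] [Fintype T] [DecidableEq A] [DecidableEq T]
    (ε₀ : ℝ) (hε₀ : 0 < ε₀)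
    (Q0 Q1 : Matrix (A ⊕ T) (A ⊕ T) ℝ)
    (hQmat : ∀ ε : ℝ, 0 < ε → ε < ε₀ →
      (∀ x y, x ≠ y → 0 ≤ (Q0 + ε • Q1) x y) ∧ ∀ x, ∑ y, (Q0 + ε • Q1) x y = 0)
    (habs : ∀ a : A, ∀ y, Q0 (Sum.inl a) y = 0)
    (hT0 : IsUnit Q0.toBlocks₂₂)
    (hA1 : IsUnit Q1.toBlocks₁₁)
    (ν : T → ℝ)
    (hνuniq : ∀ ν' : T → ℝ,
      ((∀ t, 0 ≤ ν' t) ∧ (∑ t, ν' t = 1) ∧ ν' ᵥ* QTmat Q0 Q1 = 0) → ν' = ν)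
    (π : ℝ → (A ⊕ T) → ℝ)
    (hπ : ∀ ε : ℝ, 0 < ε → ε < ε₀ →
      (∀ x, 0 ≤ π ε x) ∧ (∑ x, π ε x = 1) ∧
      ∀ y, ∑ x, π ε x * (Q0 + ε • Q1) x y = 0) :
    ((∀ s t : T, s ≠ t → 0 ≤ QTmat Q0 Q1 s t) ∧ ∀ s : T, ∑ t, QTmat Q0 Q1 s t = 0) ∧
    (∀ a : A, Tendsto (fun ε => π ε (Sum.inl a)) (𝓝[>] (0 : ℝ))
      (𝓝 ((∑ b : A, (ν ᵥ* (Q0.toBlocks₂₁ * (-Q1.toBlocks₁₁)⁻¹)) b)⁻¹ *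
        (ν ᵥ* (Q0.toBlocks₂₁ * (-Q1.toBlocks₁₁)⁻¹)) a))) ∧
    (∀ t : T, Tendsto (fun ε => π ε (Sum.inr t)) (𝓝[>] (0 : ℝ)) (𝓝 0)) ∧
    ∀ t : T, Tendsto (fun ε => π ε (Sum.inr t) / ε) (𝓝[>] (0 : ℝ))
      (𝓝 ((∑ b : A, (ν ᵥ* (Q0.toBlocks₂₁ * (-Q1.toBlocks₁₁)⁻¹)) b)⁻¹ * ν t)) := by
  have hA₁ : IsUnit Q1.toBlocks₁₁.det := (isUnit_iff_isUnit_det _).mp hA1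
  have hT₀ : IsUnit Q0.toBlocks₂₂.det := (isUnit_iff_isUnit_det _).mp hT0
  have hblocks : ∀ ε : ℝ, Q0 + ε • Q1 = fromBlocks (ε • Q1.toBlocks₁₁) (ε • Q1.toBlocks₁₂)
      (Q0.toBlocks₂₁ + ε • Q1.toBlocks₂₁) (Q0.toBlocks₂₂ + ε • Q1.toBlocks₂₂) := by
    intro ε
    ext (a | t) (b | s) <;> simp [habs, toBlocks₁₁, toBlocks₁₂, toBlocks₂₁, toBlocks₂₂]
  have hstat : ∀ᶠ ε in 𝓝[>] 0, IsScaledStationary Q1.toBlocks₁₁ Q1.toBlocks₁₂ Q0.toBlocks₂₁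
      Q1.toBlocks₂₁ Q0.toBlocks₂₂ Q1.toBlocks₂₂ ε (fun a => π ε (Sum.inl a))
      (fun t => π ε (Sum.inr t) / ε) := by
    filter_upwards [Ioo_mem_nhdsGT hε₀] with ε ⟨hε, hεε₀⟩
    obtain ⟨hp, hp₁, hbal⟩ := hπ ε hε hεε₀
    exact isScaledStationary_of_vecMul_eq_zero hε hp hp₁ (hblocks ε ▸ funext hbal)
  obtain ⟨hα, hγ⟩ := tendsto_of_isScaledStationary hA₁ hT₀ hνuniq hstat
  refine ⟨(isQMatrix_fromBlocks_of_linear hε₀ hQmat habs).schurComplement hA₁,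
    fun a => ?_, fun t => ?_, fun t => ?_⟩
  · simpa using hα.apply_nhds a
  · have hβ := (tendsto_nhdsWithin_of_tendsto_nhds tendsto_id).mul (hγ.apply_nhds t)
    rw [zero_mul] at hβ
    refine hβ.congr' ?_
    filter_upwards [self_mem_nhdsWithin] with ε (hε : 0 < ε)
    exact mul_div_cancel₀ _ hε.ne'
  · simpa using hγ.apply_nhds t

/-- With linear perturbation `Q(ε) = Q⁽⁰⁾ + ε Q⁽¹⁾` (irreducible for `0 < ε < ε₀`), 𝒜
absorbing and 𝒯 transient for `Q⁽⁰⁾`, and `A₁` invertible, the matrix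
`Q_𝒯 = T₀ + R₀(−A₁)⁻¹S₁` is a Q-matrix on 𝒯.  Moreover, if `ν` is the unique probability
vector on 𝒯 with `ν Q_𝒯 = 0`, then `π(0) = [α, 0]` with `α = c ν R₀ (−A₁)⁻¹`,
`c = (ν R₀ (−A₁)⁻¹ 𝟙)⁻¹`, and the first-order transient coefficient is `β⁽¹⁾ = c ν`
(expressed via limits of `π(ε)` and `π(ε)/ε` as `ε → 0⁺`). -/
theorem stmt13 {A T : Type*} [Fintype A] [Fintype T] [DecidableEq A] [DecidableEq T]
    [Nonempty A] [Nonempty T]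
    (ε₀ : ℝ) (hε₀ : 0 < ε₀)
    (Q0 Q1 : Matrix (A ⊕ T) (A ⊕ T) ℝ)
    (hQmat : ∀ ε : ℝ, 0 < ε → ε < ε₀ →
      (∀ x y, x ≠ y → 0 ≤ (Q0 + ε • Q1) x y) ∧ ∀ x, ∑ y, (Q0 + ε • Q1) x y = 0)
    (hirr : ∀ ε : ℝ, 0 < ε → ε < ε₀ →
      ∀ x y : A ⊕ T, Relation.ReflTransGen (fun a b => 0 < (Q0 + ε • Q1) a b) x y)
    (habs : ∀ a : A, ∀ y, Q0 (Sum.inl a) y = 0)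
    (htrans : ∀ t : T, ∃ a : A,
      Relation.ReflTransGen (fun u v => 0 < Q0 u v) (Sum.inr t) (Sum.inl a))
    (hT0 : IsUnit Q0.toBlocks₂₂)
    (hA1 : IsUnit Q1.toBlocks₁₁)
    (ν : T → ℝ) (hνnn : ∀ t, 0 ≤ ν t) (hν1 : ∑ t, ν t = 1)
    (hνQ : ν ᵥ* QTmat Q0 Q1 = 0)
    (hνuniq : ∀ ν' : T → ℝ,
      ((∀ t, 0 ≤ ν' t) ∧ (∑ t, ν' t = 1) ∧ ν' ᵥ* QTmat Q0 Q1 = 0) → ν' = ν)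
    (π : ℝ → (A ⊕ T) → ℝ)
    (hπ : ∀ ε : ℝ, 0 < ε → ε < ε₀ →
      (∀ x, 0 ≤ π ε x) ∧ (∑ x, π ε x = 1) ∧
      ∀ y, ∑ x, π ε x * (Q0 + ε • Q1) x y = 0) :
    ((∀ s t : T, s ≠ t → 0 ≤ QTmat Q0 Q1 s t) ∧ ∀ s : T, ∑ t, QTmat Q0 Q1 s t = 0) ∧
    (∀ a : A, Tendsto (fun ε => π ε (Sum.inl a)) (𝓝[>] (0 : ℝ))
      (𝓝 ((∑ b : A, (ν ᵥ* (Q0.toBlocks₂₁ * (-Q1.toBlocks₁₁)⁻¹)) b)⁻¹ *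
        (ν ᵥ* (Q0.toBlocks₂₁ * (-Q1.toBlocks₁₁)⁻¹)) a))) ∧
    (∀ t : T, Tendsto (fun ε => π ε (Sum.inr t)) (𝓝[>] (0 : ℝ)) (𝓝 0)) ∧
    ∀ t : T, Tendsto (fun ε => π ε (Sum.inr t) / ε) (𝓝[>] (0 : ℝ))
      (𝓝 ((∑ b : A, (ν ᵥ* (Q0.toBlocks₂₁ * (-Q1.toBlocks₁₁)⁻¹)) b)⁻¹ * ν t)) :=
  stmt13_general ε₀ hε₀ Q0 Q1 hQmat habs hT0 hA1 ν hνuniq π hπ
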